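/- Sampling-with-replacement SGD on convex L-Lipschitz losses over a convex set X ⊆ B(0,R), run for T iterations with step sizes (η_t) on two datasets differing in one of n points, has expected uniform argument stability E‖x^T − y^T‖ ≤ min{2R, 4L(√(Σ_{t=1}^{T-1} η_t²) + (1/n) Σ_{t=1}^{T-1} η_t)}, where the expectation is over the i.i.d. uniform index samples i_1, …, i_{T-1} ∈ [n]. -/

import Mathlib

/-!
Projection onto a convex set is nonexpansive. When both runs draw a common sample, the two
gradient steps use the same subgradient map, which is monotone, so the squared distance grows by
at most `(2Lη_t)²`; when they draw the differing sample `i`, it grows by at most `2Lη_t` in norm.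
Hence `δ_t = ‖x_t - y_t‖` satisfies `δ_{t+1}² ≤ δ_t² + (2Lη_t)² + 4Lη_t r_t δ_t`, where `r_t` is `1`
if the sample drawn at time `t` is `i` and `0` otherwise. This recursion unrolls to
`δ_T ≤ 2L√(Σ η_t²) + 4L Σ r_t η_t`. Averaging over the `n^T` index sequences replaces each `r_t`
by `1/n`. The bound `2R` is the diameter of `X`.
-/

open Finset Function
open scoped RealInnerProductSpace

theorem le_sqrt_sum_add_sum_of_sq_le {δ a b : ℕ → ℝ} {t₀ T : ℕ} (hT : t₀ ≤ T)
    (ha : ∀ t ∈ Ico t₀ T, 0 ≤ a t) (hb : ∀ t ∈ Ico t₀ T, 0 ≤ b t) (h₀ : δ t₀ = 0)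
    (hstep : ∀ t ∈ Ico t₀ T, δ (t + 1) ^ 2 ≤ δ t ^ 2 + a t + b t * δ t) :
    δ T ≤ √(∑ t ∈ Ico t₀ T, a t) + ∑ t ∈ Ico t₀ T, b t := by
  set A := ∑ t ∈ Ico t₀ T, a t
  set B := ∑ t ∈ Ico t₀ T, b t
  set M := √A + B
  have hA : 0 ≤ A := sum_nonneg ha
  have hB : 0 ≤ B := sum_nonneg hb
  have hpartial (t : ℕ) (ht : t ≤ T) :
      ∑ s ∈ Ico t₀ t, a s + M * ∑ s ∈ Ico t₀ t, b s ≤ M ^ 2 := by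
    have hsub := Ico_subset_Ico_right (a := t₀) ht
    have := sum_le_sum_of_subset_of_nonneg hsub fun s hs _ => ha s hs
    have := sum_le_sum_of_subset_of_nonneg hsub fun s hs _ => hb s hs
    nlinarith [Real.sq_sqrt hA, Real.sqrt_nonneg A]
  -- the partial sums at `t` bound `δ t ^ 2`, and they never exceed `M ^ 2`, so `δ t ≤ M` throughout
  have hinv (t : ℕ) (ht : t₀ ≤ t) :
      t ≤ T → δ t ^ 2 ≤ ∑ s ∈ Ico t₀ t, a s + M * ∑ s ∈ Ico t₀ t, b s := by
    induction t, ht using Nat.le_induction with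
    | base => intro; simp [h₀]
    | succ t ht ih =>
      intro htT
      have hmem : t ∈ Ico t₀ T := mem_Ico.2 ⟨ht, htT⟩
      have ih := ih (Nat.le_of_succ_le htT)
      have hδ : δ t ≤ M :=
        le_of_sq_le_sq (ih.trans (hpartial t (Nat.le_of_succ_le htT))) (by positivity)
      rw [sum_Ico_succ_top ht, sum_Ico_succ_top ht]
      nlinarith [hstep t hmem, mul_le_mul_of_nonneg_left hδ (hb t hmem)]
  exact le_of_sq_le_sq ((hinv T hT le_rfl).trans (hpartial T le_rfl)) (by positivity)

theorem forall_mem_Icc_of_succ_mem {α : Type*} {X : Set α} {z : ℕ → α} {t₀ T : ℕ}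
    (h₀ : z t₀ ∈ X) (hz : ∀ t ∈ Ico t₀ T, z (t + 1) ∈ X) : ∀ t ∈ Icc t₀ T, z t ∈ X := by
  intro t ht
  obtain ⟨ht₀, htT⟩ := mem_Icc.1 ht
  rcases ht₀.eq_or_lt with rfl | hlt
  · exact h₀
  · obtain ⟨s, rfl⟩ : ∃ s, t = s + 1 := ⟨t - 1, by omega⟩
    exact hz s (mem_Ico.2 ⟨by omega, by omega⟩)

theorem Fin.extend_val_apply_of_lt {α : Type*} {T : ℕ} (ω : Fin T → α) (e : ℕ → α) {t : ℕ}
    (ht : t < T) : extend Fin.val ω e t = ω ⟨t, ht⟩ :=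
  Fin.val_injective.extend_apply ω e ⟨t, ht⟩

theorem Fintype.sum_ite_apply_eq {κ α M : Type*} [Fintype κ] [DecidableEq κ] [Fintype α]
    [DecidableEq α] [AddCommMonoid M] (k : κ) (a : α) (c : M) :
    ∑ ω : κ → α, (if ω k = a then c else 0) = Fintype.card α ^ (Fintype.card κ - 1) • c := by
  simpa [piFinset_univ] using Fintype.sum_piFinset_apply (fun b => if b = a then c else 0) univ k

theorem sum_sum_filter_extend_val_eq {α : Type*} [Fintype α] [DecidableEq α] {T : ℕ}
    {s : Finset ℕ} (hs : ∀ t ∈ s, t < T) (e : ℕ → α) (a : α) (c : ℕ → ℝ) :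
    ∑ ω : Fin T → α, ∑ t ∈ s with extend Fin.val ω e t = a, c t
      = Fintype.card α ^ (T - 1) * ∑ t ∈ s, c t := by
  simp_rw [sum_filter]
  rw [sum_comm, mul_sum]
  refine sum_congr rfl fun t ht => ?_
  simp_rw [Fin.extend_val_apply_of_lt _ e (hs t ht)]
  rw [Fintype.sum_ite_apply_eq, Fintype.card_fin, nsmul_eq_mul, Nat.cast_pow]

section InnerProductSpace

variable {F : Type*} [NormedAddCommGroup F] [InnerProductSpace ℝ F] {X : Set F} {P : F → F}

theorem inner_sub_proj_le_zero (hX : Convex ℝ X) (hPmem : ∀ u, P u ∈ X)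
    (hPproj : ∀ u, ∀ w ∈ X, ‖P u - u‖ ≤ ‖w - u‖) (u : F) {w : F} (hw : w ∈ X) :
    ⟪u - P u, w - P u⟫ ≤ 0 := by
  have : Nonempty X := ⟨⟨P u, hPmem u⟩⟩
  have hbdd : BddBelow (Set.range fun v : X => ‖u - (v : F)‖) :=
    ⟨0, by rintro _ ⟨v, rfl⟩; exact norm_nonneg _⟩
  refine (norm_eq_iInf_iff_real_inner_le_zero hX (hPmem u)).1 ?_ w hw
  refine le_antisymm (le_ciInf fun v => ?_) (ciInf_le hbdd ⟨P u, hPmem u⟩)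
  simpa only [norm_sub_rev] using hPproj u v v.2

theorem norm_proj_sub_proj_le (hX : Convex ℝ X) (hPmem : ∀ u, P u ∈ X)
    (hPproj : ∀ u, ∀ w ∈ X, ‖P u - u‖ ≤ ‖w - u‖) (u v : F) : ‖P u - P v‖ ≤ ‖u - v‖ := by
  have hu := inner_sub_proj_le_zero hX hPmem hPproj u (hPmem v)
  have hv := inner_sub_proj_le_zero hX hPmem hPproj v (hPmem u)
  have hfirm : ‖P u - P v‖ ^ 2 ≤ ⟪u - v, P u - P v⟫ := by
    have : ⟪u - v, P u - P v⟫ - ‖P u - P v‖ ^ 2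
        = -⟪u - P u, P v - P u⟫ - ⟪v - P v, P u - P v⟫ := by
      rw [← real_inner_self_eq_norm_sq]
      simp only [inner_sub_left, inner_sub_right, real_inner_comm]
      ring
    linarith
  nlinarith [real_inner_le_norm (u - v) (P u - P v), norm_nonneg (P u - P v), norm_nonneg (u - v)]

theorem inner_sub_sub_nonneg_of_subgradient {f : F → ℝ} {g : F → F}
    (hg : ∀ u ∈ X, ∀ w ∈ X, f u + ⟪g u, w - u⟫ ≤ f w) {a b : F} (ha : a ∈ X) (hb : b ∈ X) :
    0 ≤ ⟪a - b, g a - g b⟫ := by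
  have hab := hg a ha b hb
  have hba := hg b hb a ha
  have : ⟪a - b, g a - g b⟫ = -(⟪g a, b - a⟫ + ⟪g b, a - b⟫) := by
    simp only [inner_sub_left, inner_sub_right, real_inner_comm]
    ring
  linarith

theorem sub_smul_sub_sub_smul (a b u v : F) (η : ℝ) :
    (a - η • u) - (b - η • v) = (a - b) - η • (u - v) := by
  rw [smul_sub]
  abel

theorem norm_sub_smul_sub_sub_smul_le {a b u v : F} {η : ℝ} (hη : 0 ≤ η) :
    ‖(a - η • u) - (b - η • v)‖ ≤ ‖a - b‖ + η * ‖u - v‖ := by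
  calc ‖(a - η • u) - (b - η • v)‖ ≤ ‖a - b‖ + ‖η • (u - v)‖ := by
        rw [sub_smul_sub_sub_smul]
        exact norm_sub_le _ _
    _ = ‖a - b‖ + η * ‖u - v‖ := by rw [norm_smul, Real.norm_of_nonneg hη]

theorem norm_sub_smul_sub_sub_smul_sq_le {a b u v : F} {η : ℝ} (hη : 0 ≤ η)
    (h : 0 ≤ ⟪a - b, u - v⟫) :
    ‖(a - η • u) - (b - η • v)‖ ^ 2 ≤ ‖a - b‖ ^ 2 + η ^ 2 * ‖u - v‖ ^ 2 := by
  rw [sub_smul_sub_sub_smul, norm_sub_sq_real, real_inner_smul_right, norm_smul,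
    Real.norm_of_nonneg hη, mul_pow]
  nlinarith [mul_nonneg hη h]

theorem norm_proj_step_sub_sq_le (hX : Convex ℝ X) (hPmem : ∀ u, P u ∈ X)
    (hPproj : ∀ u, ∀ w ∈ X, ‖P u - u‖ ≤ ‖w - u‖) {a b u v : F} {η r L : ℝ} (hη : 0 ≤ η)
    (hu : ‖u‖ ≤ L) (hv : ‖v‖ ≤ L) (hr : 0 ≤ r) (h : 0 ≤ ⟪a - b, u - v⟫ ∨ 1 ≤ r) :
    ‖P (a - η • u) - P (b - η • v)‖ ^ 2
      ≤ ‖a - b‖ ^ 2 + (2 * L * η) ^ 2 + 4 * L * η * r * ‖a - b‖ := by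
  have hproj := norm_proj_sub_proj_le hX hPmem hPproj (a - η • u) (b - η • v)
  have hL : 0 ≤ L := (norm_nonneg u).trans hu
  have huv : ‖u - v‖ ≤ 2 * L := (norm_sub_le u v).trans (by linarith)
  have hcross : 0 ≤ 4 * L * η * r * ‖a - b‖ := by positivity
  rcases h with hmono | hr1
  · calc ‖P (a - η • u) - P (b - η • v)‖ ^ 2 ≤ ‖(a - η • u) - (b - η • v)‖ ^ 2 := by gcongr
      _ ≤ ‖a - b‖ ^ 2 + η ^ 2 * ‖u - v‖ ^ 2 := norm_sub_smul_sub_sub_smul_sq_le hη hmono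
      _ ≤ ‖a - b‖ ^ 2 + η ^ 2 * (2 * L) ^ 2 := by gcongr
      _ ≤ _ := by nlinarith
  · have hstep : ‖P (a - η • u) - P (b - η • v)‖ ≤ ‖a - b‖ + 2 * L * η :=
      calc _ ≤ ‖a - b‖ + η * ‖u - v‖ := hproj.trans (norm_sub_smul_sub_sub_smul_le hη)
        _ ≤ ‖a - b‖ + 2 * L * η := by nlinarith
    calc ‖P (a - η • u) - P (b - η • v)‖ ^ 2 ≤ (‖a - b‖ + 2 * L * η) ^ 2 := by gcongr
      _ ≤ _ := by nlinarith [mul_nonneg (mul_nonneg hL hη) (norm_nonneg (a - b))]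

theorem norm_sub_le_of_proj_steps (hX : Convex ℝ X) (hPmem : ∀ u, P u ∈ X)
    (hPproj : ∀ u, ∀ w ∈ X, ‖P u - u‖ ≤ ‖w - u‖) {x y u v : ℕ → F} {η r : ℕ → ℝ} {L : ℝ}
    {t₀ T : ℕ} (hL : 0 ≤ L) (hT : t₀ ≤ T) (h₀ : x t₀ = y t₀) (hη : ∀ t ∈ Ico t₀ T, 0 ≤ η t)
    (hu : ∀ t ∈ Ico t₀ T, ‖u t‖ ≤ L) (hv : ∀ t ∈ Ico t₀ T, ‖v t‖ ≤ L)
    (hr : ∀ t ∈ Ico t₀ T, 0 ≤ r t) (h : ∀ t ∈ Ico t₀ T, 0 ≤ ⟪x t - y t, u t - v t⟫ ∨ 1 ≤ r t)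
    (hx : ∀ t ∈ Ico t₀ T, x (t + 1) = P (x t - η t • u t))
    (hy : ∀ t ∈ Ico t₀ T, y (t + 1) = P (y t - η t • v t)) :
    ‖x T - y T‖ ≤ 2 * L * √(∑ t ∈ Ico t₀ T, η t ^ 2) + 4 * L * ∑ t ∈ Ico t₀ T, η t * r t := by
  have hrec := le_sqrt_sum_add_sum_of_sq_le (δ := fun t => ‖x t - y t‖)
    (a := fun t => (2 * L * η t) ^ 2) (b := fun t => 4 * L * η t * r t) hT
    (fun _ _ => sq_nonneg _) (fun t ht => by have := hη t ht; have := hr t ht; positivity)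
    (by simp [h₀]) fun t ht => by
      simp only [hx t ht, hy t ht]
      exact norm_proj_step_sub_sq_le hX hPmem hPproj (hη t ht) (hu t ht) (hv t ht) (hr t ht)
        (h t ht)
  have hsqrt : √(∑ t ∈ Ico t₀ T, (2 * L * η t) ^ 2) = 2 * L * √(∑ t ∈ Ico t₀ T, η t ^ 2) := by
    simp_rw [mul_pow _ (η _), ← mul_sum]
    rw [Real.sqrt_mul (by positivity), Real.sqrt_sq (by positivity)]
  calc ‖x T - y T‖ ≤ √(∑ t ∈ Ico t₀ T, (2 * L * η t) ^ 2) + ∑ t ∈ Ico t₀ T, 4 * L * η t * r t :=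
        hrec
    _ = _ := by simp_rw [hsqrt, mul_assoc (4 * L), ← mul_sum]

variable {ι : Type*} [DecidableEq ι] {L : ℝ} {f : ι → F → ℝ} {G G' : ι → F → F} {i : ι}
  {η : ℕ → ℝ} {t₀ T : ℕ}

theorem norm_sub_le_of_sgd_steps (hX : Convex ℝ X) (hPmem : ∀ u, P u ∈ X)
    (hPproj : ∀ u, ∀ w ∈ X, ‖P u - u‖ ≤ ‖w - u‖) (hL : 0 ≤ L)
    (hG : ∀ k, ∀ u ∈ X, ∀ w ∈ X, f k u + ⟪G k u, w - u⟫ ≤ f k w)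
    (hGL : ∀ k u, ‖G k u‖ ≤ L) (hG'L : ∀ k u, ‖G' k u‖ ≤ L) (hGeq : ∀ k, k ≠ i → G k = G' k)
    {j : ℕ → ι} {x y : ℕ → F} (hT : t₀ ≤ T) (hη : ∀ t ∈ Ico t₀ T, 0 ≤ η t) (hx₀ : x t₀ ∈ X)
    (h₀ : x t₀ = y t₀) (hx : ∀ t ∈ Ico t₀ T, x (t + 1) = P (x t - η t • G (j t) (x t)))
    (hy : ∀ t ∈ Ico t₀ T, y (t + 1) = P (y t - η t • G' (j t) (y t))) :
    ‖x T - y T‖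
      ≤ 2 * L * √(∑ t ∈ Ico t₀ T, η t ^ 2) + 4 * L * ∑ t ∈ Ico t₀ T with j t = i, η t := by
  have hxX := forall_mem_Icc_of_succ_mem hx₀ fun t ht => hx t ht ▸ hPmem _
  have hyX := forall_mem_Icc_of_succ_mem (h₀ ▸ hx₀) fun t ht => hy t ht ▸ hPmem _
  have hmono (t : ℕ) (ht : t ∈ Ico t₀ T) :
      0 ≤ ⟪x t - y t, G (j t) (x t) - G' (j t) (y t)⟫ ∨ 1 ≤ if j t = i then (1 : ℝ) else 0 := by
    by_cases hj : j t = i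
    · simp [hj]
    · rw [← hGeq _ hj]
      exact .inl <| inner_sub_sub_nonneg_of_subgradient (hG (j t))
        (hxX t (Ico_subset_Icc_self ht)) (hyX t (Ico_subset_Icc_self ht))
  have := norm_sub_le_of_proj_steps hX hPmem hPproj hL hT h₀ hη (fun _ _ => hGL _ _)
    (fun _ _ => hG'L _ _) (fun t _ => by positivity) hmono hx hy
  simpa only [sum_filter, mul_ite, mul_one, mul_zero] using this

theorem sum_norm_sub_le_of_sgd_runs [Fintype ι] (hX : Convex ℝ X) (hPmem : ∀ u, P u ∈ X)
    (hPproj : ∀ u, ∀ w ∈ X, ‖P u - u‖ ≤ ‖w - u‖) (hL : 0 ≤ L)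
    (hG : ∀ k, ∀ u ∈ X, ∀ w ∈ X, f k u + ⟪G k u, w - u⟫ ≤ f k w)
    (hGL : ∀ k u, ‖G k u‖ ≤ L) (hG'L : ∀ k u, ‖G' k u‖ ≤ L) (hGeq : ∀ k, k ≠ i → G k = G' k)
    {x y : (Fin T → ι) → ℕ → F} (hT : t₀ ≤ T) (hη : ∀ t ∈ Ico t₀ T, 0 ≤ η t)
    (hx₀ : ∀ ω, x ω t₀ ∈ X) (h₀ : ∀ ω, x ω t₀ = y ω t₀)
    (hx : ∀ ω t, t₀ ≤ t → ∀ ht : t < T, x ω (t + 1) = P (x ω t - η t • G (ω ⟨t, ht⟩) (x ω t)))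
    (hy : ∀ ω t, t₀ ≤ t → ∀ ht : t < T, y ω (t + 1) = P (y ω t - η t • G' (ω ⟨t, ht⟩) (y ω t))) :
    ∑ ω, ‖x ω T - y ω T‖
      ≤ Fintype.card ι ^ T * (2 * L * √(∑ t ∈ Ico t₀ T, η t ^ 2))
        + 4 * L * (Fintype.card ι ^ (T - 1) * ∑ t ∈ Ico t₀ T, η t) := by
  -- `ω` as a sequence indexed by `ℕ`; its values from time `T` on are never used
  let j (ω : Fin T → ι) : ℕ → ι := extend Fin.val ω fun _ => i
  have hj (ω) {t} (ht : t ∈ Ico t₀ T) : j ω t = ω ⟨t, (mem_Ico.1 ht).2⟩ :=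
    Fin.extend_val_apply_of_lt _ _ _
  have hpath (ω : Fin T → ι) :=
    norm_sub_le_of_sgd_steps (j := j ω) hX hPmem hPproj hL hG hGL hG'L hGeq hT hη (hx₀ ω) (h₀ ω)
      (fun t ht => by rw [hx ω t (mem_Ico.1 ht).1 (mem_Ico.1 ht).2, hj ω ht])
      (fun t ht => by rw [hy ω t (mem_Ico.1 ht).1 (mem_Ico.1 ht).2, hj ω ht])
  calc ∑ ω, ‖x ω T - y ω T‖
      ≤ ∑ ω, (2 * L * √(∑ t ∈ Ico t₀ T, η t ^ 2)
          + 4 * L * ∑ t ∈ Ico t₀ T with j ω t = i, η t) := sum_le_sum fun ω _ => hpath ω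
    _ = _ := by
      rw [sum_add_distrib, sum_const, ← mul_sum,
        sum_sum_filter_extend_val_eq (fun t ht => (mem_Ico.1 ht).2), card_univ,
        Fintype.card_fun, Fintype.card_fin, nsmul_eq_mul, Nat.cast_pow]

end InnerProductSpace

theorem stmt9_general {d n : ℕ} (hn : 0 < n)
    (X : Set (EuclideanSpace ℝ (Fin d)))
    (hXconvex : Convex ℝ X)
    (R L : ℝ) (hL : 0 ≤ L)
    (hXR : X ⊆ Metric.closedBall 0 R)
    (P : EuclideanSpace ℝ (Fin d) → EuclideanSpace ℝ (Fin d))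
    (hPmem : ∀ u, P u ∈ X)
    (hPproj : ∀ u, ∀ w ∈ X, ‖P u - u‖ ≤ ‖w - u‖)
    (i : Fin n)
    (f : Fin n → EuclideanSpace ℝ (Fin d) → ℝ)
    (G G' : Fin n → EuclideanSpace ℝ (Fin d) → EuclideanSpace ℝ (Fin d))
    (hG : ∀ j u, ∀ w ∈ X, f j u + (inner ℝ (G j u) (w - u) : ℝ) ≤ f j w)
    (hGL : ∀ j u, ‖G j u‖ ≤ L) (hG'L : ∀ j u, ‖G' j u‖ ≤ L)
    (hGeq : ∀ j, j ≠ i → G j = G' j)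
    (T : ℕ) (hT : 1 ≤ T)
    (η : ℕ → ℝ) (hη : ∀ t, 0 ≤ η t)
    (x y : (Fin T → Fin n) → ℕ → EuclideanSpace ℝ (Fin d))
    (x0 : EuclideanSpace ℝ (Fin d)) (hx0 : x0 ∈ X)
    (hx1 : ∀ ω, x ω 1 = x0) (hy1 : ∀ ω, y ω 1 = x0)
    (hxstep : ∀ ω (t : ℕ) (h1 : 1 ≤ t) (ht : t < T),
      x ω (t + 1) = P (x ω t - η t • G (ω ⟨t, ht⟩) (x ω t)))
    (hystep : ∀ ω (t : ℕ) (h1 : 1 ≤ t) (ht : t < T),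
      y ω (t + 1) = P (y ω t - η t • G' (ω ⟨t, ht⟩) (y ω t))) :
    (∑ ω : Fin T → Fin n, ‖x ω T - y ω T‖) / (n : ℝ) ^ T
      ≤ min (2 * R)
        (4 * L * (Real.sqrt (∑ t ∈ Finset.Icc 1 (T - 1), η t ^ 2)
          + (1 / n) * ∑ t ∈ Finset.Icc 1 (T - 1), η t)) := by
  have hIcc : Icc 1 (T - 1) = Ico 1 T :=
    Icc_sub_one_right_eq_Ico_of_not_isMin (not_isMin_iff_ne_bot.2 (Nat.one_le_iff_ne_zero.1 hT)) 1
  have hpos : (0 : ℝ) < n ^ T := by positivity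
  have hxT (ω) : x ω T ∈ X := forall_mem_Icc_of_succ_mem (hx1 ω ▸ hx0)
    (fun t ht => hxstep ω t (mem_Ico.1 ht).1 (mem_Ico.1 ht).2 ▸ hPmem _) T (mem_Icc.2 ⟨hT, le_rfl⟩)
  have hyT (ω) : y ω T ∈ X := forall_mem_Icc_of_succ_mem (hy1 ω ▸ hx0)
    (fun t ht => hystep ω t (mem_Ico.1 ht).1 (mem_Ico.1 ht).2 ▸ hPmem _) T (mem_Icc.2 ⟨hT, le_rfl⟩)
  rw [hIcc]
  set A := ∑ t ∈ Ico 1 T, η t ^ 2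
  set S := ∑ t ∈ Ico 1 T, η t
  refine le_min ?_ ?_ <;> rw [div_le_iff₀ hpos]
  · calc ∑ ω, ‖x ω T - y ω T‖ ≤ ∑ _ω : Fin T → Fin n, 2 * R := sum_le_sum fun ω _ => by
          linarith [norm_sub_le (x ω T) (y ω T), mem_closedBall_zero_iff.1 (hXR (hxT ω)),
            mem_closedBall_zero_iff.1 (hXR (hyT ω))]
      _ = 2 * R * n ^ T := by simp [mul_comm]
  · calc ∑ ω, ‖x ω T - y ω T‖ ≤ n ^ T * (2 * L * √A) + 4 * L * (n ^ (T - 1) * S) := by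
          simpa using sum_norm_sub_le_of_sgd_runs hXconvex hPmem hPproj hL (fun k u _ => hG k u)
            hGL hG'L hGeq hT (fun t _ => hη t) (fun ω => hx1 ω ▸ hx0) (by simp [hx1, hy1])
            hxstep hystep
      _ ≤ 4 * L * (√A + 1 / n * S) * n ^ T := by
          rw [← pow_sub_one_mul (by omega : T ≠ 0)]
          field_simp
          nlinarith [mul_nonneg (mul_nonneg hL (Real.sqrt_nonneg A)) hpos.le]

/-- Expected uniform argument stability of sampling-with-replacement SGD: the expectation
(over uniform i.i.d. index samples) of `‖x^T − y^T‖` is at most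
`min{2R, 4L(√(Ση²) + (1/n)Ση)}`. -/
theorem stmt9 {d n : ℕ} (hn : 0 < n)
    (X : Set (EuclideanSpace ℝ (Fin d)))
    (hXclosed : IsClosed X) (hXconvex : Convex ℝ X)
    (R L : ℝ) (hL : 0 ≤ L)
    (hXR : X ⊆ Metric.closedBall 0 R)
    (P : EuclideanSpace ℝ (Fin d) → EuclideanSpace ℝ (Fin d))
    (hPmem : ∀ u, P u ∈ X)
    (hPproj : ∀ u, ∀ w ∈ X, ‖P u - u‖ ≤ ‖w - u‖)
    (i : Fin n)
    (f f' : Fin n → EuclideanSpace ℝ (Fin d) → ℝ)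
    (hdiff : ∀ j, j ≠ i → f j = f' j)
    (hconv : ∀ j, ConvexOn ℝ X (f j)) (hconv' : ∀ j, ConvexOn ℝ X (f' j))
    (hLip : ∀ j, ∀ u ∈ X, ∀ v ∈ X, |f j u - f j v| ≤ L * ‖u - v‖)
    (hLip' : ∀ j, ∀ u ∈ X, ∀ v ∈ X, |f' j u - f' j v| ≤ L * ‖u - v‖)
    (G G' : Fin n → EuclideanSpace ℝ (Fin d) → EuclideanSpace ℝ (Fin d))
    (hG : ∀ j u, ∀ w ∈ X, f j u + (inner ℝ (G j u) (w - u) : ℝ) ≤ f j w)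
    (hG' : ∀ j u, ∀ w ∈ X, f' j u + (inner ℝ (G' j u) (w - u) : ℝ) ≤ f' j w)
    (hGL : ∀ j u, ‖G j u‖ ≤ L) (hG'L : ∀ j u, ‖G' j u‖ ≤ L)
    (hGeq : ∀ j, j ≠ i → G j = G' j)
    (T : ℕ) (hT : 1 ≤ T)
    (η : ℕ → ℝ) (hη : ∀ t, 0 ≤ η t)
    (x y : (Fin T → Fin n) → ℕ → EuclideanSpace ℝ (Fin d))
    (x0 : EuclideanSpace ℝ (Fin d)) (hx0 : x0 ∈ X)
    (hx1 : ∀ ω, x ω 1 = x0) (hy1 : ∀ ω, y ω 1 = x0)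
    (hxstep : ∀ ω (t : ℕ) (h1 : 1 ≤ t) (ht : t < T),
      x ω (t + 1) = P (x ω t - η t • G (ω ⟨t, ht⟩) (x ω t)))
    (hystep : ∀ ω (t : ℕ) (h1 : 1 ≤ t) (ht : t < T),
      y ω (t + 1) = P (y ω t - η t • G' (ω ⟨t, ht⟩) (y ω t))) :
    (∑ ω : Fin T → Fin n, ‖x ω T - y ω T‖) / (n : ℝ) ^ T
      ≤ min (2 * R)
        (4 * L * (Real.sqrt (∑ t ∈ Finset.Icc 1 (T - 1), η t ^ 2)
          + (1 / n) * ∑ t ∈ Finset.Icc 1 (T - 1), η t)) :=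
  stmt9_general hn X hXconvex R L hL hXR P hPmem hPproj i f G G' hG hGL hG'L hGeq T hT η hη x y x0
    hx0 hx1 hy1 hxstep hystep
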